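/- Let 𝒞=(C,w) be a positive-weighted tree with at least 3 vertices, and for a vertex x set t_x = (1/2)·min{ D_{x,y}(𝒞)+D_{x,z}(𝒞)−D_{y,z}(𝒞) : y,z ∈ V(C)∖{x}, y≠z }. Then: (1) if x is a leaf of C, then t_x equals the weight of the pendant edge incident to x; and (2) t_x = 0 if and only if x is not a leaf of C. -/

import Mathlib

open SimpleGraph

variable {V : Type*}

/-- weight of a walk: sum of the weights of its edges -/
noncomputable def walkWeight (G : SimpleGraph V) (w : Sym2 V → ℝ) {i j : V} (p : G.Walk i j) : ℝ :=
  (p.edges.map w).sum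

/-- the 2-weight: min over paths joining i and j -/
noncomputable def wdist (G : SimpleGraph V) (w : Sym2 V → ℝ) (i j : V) : ℝ :=
  sInf {x : ℝ | ∃ p : G.Walk i j, p.IsPath ∧ walkWeight G w p = x}

def Realizes (G : SimpleGraph V) (w : Sym2 V → ℝ) {i j : V} (p : G.Walk i j) : Prop :=
  p.IsPath ∧ walkWeight G w p = wdist G w i j

def UsefulEdge (G : SimpleGraph V) (w : Sym2 V → ℝ) (e : Sym2 V) : Prop :=
  ∃ a b : V, a ≠ b ∧ ∀ p : G.Walk a b, Realizes G w p → e ∈ p.edges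

def Pruned (G : SimpleGraph V) (w : Sym2 V → ℝ) : Prop :=
  ∀ e ∈ G.edgeSet, UsefulEdge G w e

def PosWeights (G : SimpleGraph V) (w : Sym2 V → ℝ) : Prop :=
  ∀ e ∈ G.edgeSet, 0 < w e

def Indec (G : SimpleGraph V) (w : Sym2 V → ℝ) (i j : V) : Prop :=
  ∀ z : V, z ≠ i → z ≠ j → wdist G w i j < wdist G w i z + wdist G w z j

def IsLeaf (G : SimpleGraph V) (v : V) : Prop := (G.neighborSet v).ncard = 1

def IsSnake (G : SimpleGraph V) : Prop :=
  G.IsTree ∧ {v : V | IsLeaf G v}.ncard = 2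

def IsCaterpillar (G : SimpleGraph V) : Prop :=
  G.IsTree ∧ ∃ (x₁ x₂ : V) (p : G.Walk x₁ x₂), p.IsPath ∧
    {v : V | v ∈ p.support} = {v : V | 2 ≤ (G.neighborSet v).ncard}

def IsPolygon {n : ℕ} [NeZero n] (G : SimpleGraph (Fin n)) : Prop :=
  ∃ σ : Equiv.Perm (Fin n), G.edgeSet = Set.range (fun i : Fin n => s(σ i, σ (i + 1)))

noncomputable def tmin (G : SimpleGraph V) (w : Sym2 V → ℝ) (x : V) : ℝ :=
  (1 / 2) * sInf {r : ℝ | ∃ y z : V, y ≠ x ∧ z ≠ x ∧ y ≠ z ∧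
    r = wdist G w x y + wdist G w x z - wdist G w y z}

def IsBipartiteOn (G : SimpleGraph V) (X Y : Set V) : Prop :=
  X ∩ Y = ∅ ∧ X ∪ Y = Set.univ ∧ ∀ a b : V, G.Adj a b → (a ∈ X ∧ b ∈ Y) ∨ (a ∈ Y ∧ b ∈ X)

noncomputable def chainSum {α : Type*} (D : α → α → ℝ) : List α → ℝ
  | [] => 0
  | [_] => 0
  | a :: b :: l => D a b + chainSum D (b :: l)

def FIndec {n : ℕ} (D : Fin n → Fin n → ℝ) (i j : Fin n) : Prop :=
  ∀ z : Fin n, z ≠ i → z ≠ j → D i j < D i z + D z j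

def TriangleIneq {n : ℕ} (D : Fin n → Fin n → ℝ) : Prop :=
  ∀ i j k : Fin n, i ≠ j → j ≠ k → i ≠ k → D i j ≤ D i k + D k j

def MaxTwice (x y z : ℝ) : Prop :=
  (x = y ∧ z ≤ x) ∨ (x = z ∧ y ≤ x) ∨ (y = z ∧ x ≤ y)

def FourPoint {n : ℕ} (D : Fin n → Fin n → ℝ) : Prop :=
  ∀ i j k h : Fin n, i ≠ j → i ≠ k → i ≠ h → j ≠ k → j ≠ h → k ≠ h →
    MaxTwice (D i j + D k h) (D i k + D j h) (D i h + D k j)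

def MedianFamily {n : ℕ} (D : Fin n → Fin n → ℝ) : Prop :=
  ∀ a b c : Fin n, ∃! m : Fin n,
    ∀ i ∈ ({a, b, c} : Set (Fin n)), ∀ j ∈ ({a, b, c} : Set (Fin n)), i ≠ j →
      D i j = D i m + D j m

noncomputable def tminF {n : ℕ} (D : Fin n → Fin n → ℝ) (x : Fin n) : ℝ :=
  (1 / 2) * sInf {r : ℝ | ∃ y z : Fin n, y ≠ x ∧ z ≠ x ∧ y ≠ z ∧ r = D x y + D x z - D y z}

def interiorSet {G : SimpleGraph V} {u v : V} (p : G.Walk u v) : Set V :=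
  {x : V | x ∈ p.support ∧ x ≠ u ∧ x ≠ v}

/-!
In a tree the 2-weight is the weight of the unique path, so it is a metric and
`D x y + D x z - D y z` is twice the Gromov product `(y | z)_x`, which is nonnegative.
If `x` has two distinct neighbours `a, b`, the path `a x b` passes through `x` and the product
vanishes. If `x` is a leaf with neighbour `u`, every path leaving `x` starts with the edge
`xu`, so the quantity is `2 w(xu) + D u y + D u z - D y z ≥ 2 w(xu)`, with equality for `y = u`
and any third vertex `z`.
-/

section WeightedTree

variable {G : SimpleGraph V} {w : Sym2 V → ℝ}

lemma walkWeight_cons {u v x : V} (h : G.Adj u v) (p : G.Walk v x) :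
    walkWeight G w (p.cons h) = w s(u, v) + walkWeight G w p := by
  simp [walkWeight]

lemma walkWeight_append {u v x : V} (p : G.Walk u v) (q : G.Walk v x) :
    walkWeight G w (p.append q) = walkWeight G w p + walkWeight G w q := by
  simp [walkWeight, Walk.edges_append]

lemma wdist_eq_walkWeight (hG : G.IsAcyclic) {i j : V} {p : G.Walk i j} (hp : p.IsPath) :
    wdist G w i j = walkWeight G w p := by
  have hpaths : {x | ∃ q : G.Walk i j, q.IsPath ∧ walkWeight G w q = x} =
      {walkWeight G w p} := by
    ext x
    constructor
    · rintro ⟨q, hq, rfl⟩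
      obtain rfl : q = p := congrArg Subtype.val ((hG.subsingleton_path i j).elim ⟨q, hq⟩ ⟨p, hp⟩)
      rfl
    · rintro rfl
      exact ⟨p, hp, rfl⟩
  rw [wdist, hpaths, csInf_singleton]

lemma wdist_self (hG : G.IsAcyclic) (i : V) : wdist G w i i = 0 :=
  wdist_eq_walkWeight hG (p := .nil) .nil

lemma wdist_cons (hG : G.IsAcyclic) {i j k : V} {h : G.Adj i j} {p : G.Walk j k}
    (hp : (p.cons h).IsPath) : wdist G w i k = w s(i, j) + wdist G w j k := by
  rw [wdist_eq_walkWeight hG hp, wdist_eq_walkWeight hG hp.of_cons, walkWeight_cons]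

lemma wdist_of_adj (hG : G.IsAcyclic) {i j : V} (h : G.Adj i j) : wdist G w i j = w s(i, j) := by
  rw [wdist_cons hG (by simp [h.ne] : (Walk.nil.cons h).IsPath), wdist_self hG, add_zero]

lemma wdist_comm (hT : G.IsTree) (i j : V) : wdist G w i j = wdist G w j i := by
  obtain ⟨p, hp, -⟩ := hT.existsUnique_path i j
  rw [wdist_eq_walkWeight hT.isAcyclic hp, wdist_eq_walkWeight hT.isAcyclic hp.reverse]
  simp [walkWeight, Walk.edges_reverse, List.map_reverse, List.sum_reverse]

lemma wdist_le_walkWeight (hG : G.IsAcyclic) (hw : ∀ e ∈ G.edgeSet, 0 ≤ w e)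
    {i j : V} (p : G.Walk i j) : wdist G w i j ≤ walkWeight G w p := by
  classical
  rw [wdist_eq_walkWeight hG p.bypass_isPath]
  refine ((Walk.edges_bypass_sublist_edges p).map w).sum_le_sum fun x hx => ?_
  obtain ⟨e, he, rfl⟩ := List.mem_map.mp hx
  exact hw e (p.edges_subset_edgeSet he)

lemma wdist_triangle (hT : G.IsTree) (hw : ∀ e ∈ G.edgeSet, 0 ≤ w e) (i j k : V) :
    wdist G w i k ≤ wdist G w i j + wdist G w j k := by
  obtain ⟨p, hp, -⟩ := hT.existsUnique_path i j
  obtain ⟨q, hq, -⟩ := hT.existsUnique_path j k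
  rw [wdist_eq_walkWeight hT.isAcyclic hp, wdist_eq_walkWeight hT.isAcyclic hq,
    ← walkWeight_append]
  exact wdist_le_walkWeight hT.isAcyclic hw _

lemma IsLeaf.eq_of_adj {x u v : V} (hx : IsLeaf G x) (hu : G.Adj x u) (hv : G.Adj x v) :
    v = u := by
  obtain ⟨a, ha⟩ := Set.ncard_eq_one.mp hx
  have hu' : u ∈ G.neighborSet x := hu
  have hv' : v ∈ G.neighborSet x := hv
  rw [ha, Set.mem_singleton_iff] at hu' hv'
  rw [hu', hv']

lemma exists_adj_adj_ne_of_not_isLeaf [Finite V] {x u : V} (hu : G.Adj x u) (hx : ¬IsLeaf G x) :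
    ∃ a b, G.Adj x a ∧ G.Adj x b ∧ a ≠ b := by
  have hpos : 0 < (G.neighborSet x).ncard := (Set.ncard_pos (Set.toFinite _)).mpr ⟨u, hu⟩
  exact (Set.one_lt_ncard_iff (Set.toFinite _)).mp (lt_of_le_of_ne hpos (Ne.symm hx))

lemma wdist_of_isLeaf (hT : G.IsTree) {x u y : V} (hx : IsLeaf G x) (hu : G.Adj x u)
    (hy : y ≠ x) : wdist G w x y = w s(x, u) + wdist G w u y := by
  obtain ⟨p, hp, -⟩ := hT.existsUnique_path x y
  cases p with
  | nil => exact absurd rfl hy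
  | cons h q =>
    obtain rfl := hx.eq_of_adj hu h
    exact wdist_cons hT.isAcyclic hp

def twiceGromovProducts (G : SimpleGraph V) (w : Sym2 V → ℝ) (x : V) : Set ℝ :=
  {r | ∃ y z, y ≠ x ∧ z ≠ x ∧ y ≠ z ∧ r = wdist G w x y + wdist G w x z - wdist G w y z}

lemma tmin_eq_of_isLeast {x : V} {m : ℝ} (h : IsLeast (twiceGromovProducts G w x) m) :
    tmin G w x = m / 2 := by
  change 1 / 2 * sInf (twiceGromovProducts G w x) = m / 2
  rw [h.csInf_eq]
  ring

lemma isLeast_twiceGromovProducts_of_adj_adj (hT : G.IsTree) (hw : ∀ e ∈ G.edgeSet, 0 ≤ w e)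
    {x a b : V} (ha : G.Adj x a) (hb : G.Adj x b) (hab : a ≠ b) :
    IsLeast (twiceGromovProducts G w x) 0 := by
  refine ⟨⟨a, b, ha.ne', hb.ne', hab, ?_⟩, ?_⟩
  · have hpath : ((Walk.nil.cons hb).cons ha.symm).IsPath := by simp [hb.ne, ha.ne', hab]
    rw [wdist_cons hT.isAcyclic hpath, wdist_of_adj hT.isAcyclic ha,
      wdist_of_adj hT.isAcyclic hb, Sym2.eq_swap]
    ring
  · rintro r ⟨y, z, -, -, -, rfl⟩
    have := wdist_triangle (w := w) hT hw y x z
    rw [wdist_comm hT y x] at this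
    linarith

lemma isLeast_twiceGromovProducts_of_isLeaf (hT : G.IsTree) (hw : ∀ e ∈ G.edgeSet, 0 ≤ w e)
    {x u z : V} (hx : IsLeaf G x) (hu : G.Adj x u) (hzx : z ≠ x) (hzu : z ≠ u) :
    IsLeast (twiceGromovProducts G w x) (2 * w s(x, u)) := by
  refine ⟨⟨u, z, hu.ne', hzx, hzu.symm, ?_⟩, ?_⟩
  · rw [wdist_of_isLeaf hT hx hu hu.ne', wdist_of_isLeaf hT hx hu hzx, wdist_self hT.isAcyclic]
    ring
  · rintro r ⟨y, z, hy, hz, -, rfl⟩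
    have := wdist_triangle (w := w) hT hw y u z
    rw [wdist_comm hT y u] at this
    rw [wdist_of_isLeaf hT hx hu hy, wdist_of_isLeaf hT hx hu hz]
    linarith

end WeightedTree

/-- In a positive-weighted tree with at least 3 vertices: if `x` is a leaf then `t x` equals
the weight of the pendant edge incident to `x`, and `t x = 0` iff `x` is not a leaf. -/
theorem stmt_17 {n : ℕ} (hn : 3 ≤ n) (C : SimpleGraph (Fin n)) (htree : C.IsTree)
    (w : Sym2 (Fin n) → ℝ) (hw : PosWeights C w) :
    (∀ x u : Fin n, IsLeaf C x → C.Adj x u → tmin C w x = w s(x, u)) ∧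
      (∀ x : Fin n, tmin C w x = 0 ↔ ¬ IsLeaf C x) := by
  have hw₀ : ∀ e ∈ C.edgeSet, 0 ≤ w e := fun e he => (hw e he).le
  have : Nontrivial (Fin n) := Fin.nontrivial_iff_two_le.mpr (by omega)
  have hadj : ∀ x, ∃ u, C.Adj x u := htree.connected.preconnected.exists_adj_of_nontrivial
  have hleaf : ∀ x u, IsLeaf C x → C.Adj x u → tmin C w x = w s(x, u) := by
    intro x u hx hu
    obtain ⟨z, hzx, hzu⟩ := ENat.exists_ne_ne_of_three_le (by simpa using hn) x u
    rw [tmin_eq_of_isLeast (isLeast_twiceGromovProducts_of_isLeaf htree hw₀ hx hu hzx hzu)]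
    ring
  refine ⟨hleaf, fun x => ⟨fun h0 hx => ?_, fun hx => ?_⟩⟩
  · obtain ⟨u, hu⟩ := hadj x
    exact (hw _ hu).ne' (hleaf x u hx hu ▸ h0)
  · obtain ⟨u, hu⟩ := hadj x
    obtain ⟨a, b, ha, hb, hab⟩ := exists_adj_adj_ne_of_not_isLeaf hu hx
    rw [tmin_eq_of_isLeast (isLeast_twiceGromovProducts_of_adj_adj htree hw₀ ha hb hab),
      zero_div]
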